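/- Let V be a finite-dimensional real vector space, k an integer, and ψ a bilinear form on V with ψ(w, v) = (-1)^k ψ(v, w) for all v, w. Suppose V_ℂ = ⊕_{p+q=k} V^{p,q} and V_ℂ = ⊕_{p+q=k} W^{p,q} are two Hodge structures of weight k on V, both polarized by ψ, with dim_ℂ V^{p,q} = dim_ℂ W^{p,q} for all (p,q). Then there exists a real-linear automorphism g of V with ψ(g v, g w) = ψ(v, w) for all v, w ∈ V, whose complexification carries V^{p,q} onto W^{p,q} for every (p,q). (Transitivity of the real isometry group G_ℝ on the period domain D.) -/

import Mathlib

open TensorProduct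

instance : RingHomSurjective (starRingEnd ℂ) :=
  ⟨fun x => ⟨star x, star_star x⟩⟩

/-- Conjugation on the complexification `ℂ ⊗[ℝ] V`, `z ⊗ v ↦ z̄ ⊗ v`,
as a `starRingEnd ℂ`-semilinear map. -/
noncomputable def conjC (V : Type*) [AddCommGroup V] [Module ℝ V] :
    (ℂ ⊗[ℝ] V) →ₛₗ[starRingEnd ℂ] (ℂ ⊗[ℝ] V) where
  toFun := TensorProduct.map Complex.conjAe.toLinearMap LinearMap.id
  map_add' := map_add _
  map_smul' := by
    intro z x
    induction x using TensorProduct.induction_on with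
    | zero => simp
    | tmul c v =>
        simp [TensorProduct.smul_tmul', TensorProduct.map_tmul, map_mul]
    | add x y hx hy =>
        simp only [smul_add, map_add]
        exact congrArg₂ (· + ·) hx hy

/-- The natural inclusion `V → ℂ ⊗[ℝ] V`, `v ↦ 1 ⊗ v`. -/
noncomputable def iotaC (V : Type*) [AddCommGroup V] [Module ℝ V] :
    V →ₗ[ℝ] ℂ ⊗[ℝ] V :=
  TensorProduct.mk ℝ ℂ V 1

/-!
On `V^{p,q}` the form `h_p(x, y) = i ^ (p - q) ψ(y, x̄)` (`hodgeForm`) is hermitian and, by the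
second Hodge–Riemann relation, positive definite; conjugation is antiunitary from
`(V^{p,q}, h_p)` onto `(V^{q,p}, h_q)`. Choose an `h_p`-orthonormal basis of `V^{p,q}` for `p > q`,
its conjugate as basis of `V^{q,p}`, and an orthonormal basis of real vectors of `V^{p,p}`. By the
first Hodge–Riemann relation, the Gram matrix of `ψ` in the resulting basis of `V_ℂ`, and the
permutation by which conjugation acts on it, depend only on the Hodge numbers. So the
complex-linear map sending the basis adapted to `(V^{p,q})` to the one adapted to `(W^{p,q})`
preserves `ψ` and commutes with conjugation, hence is the complexification of a real isometry.
-/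

section Complexification

variable {V W : Type*} [AddCommGroup V] [Module ℝ V] [AddCommGroup W] [Module ℝ W]

lemma conjC_tmul (z : ℂ) (v : V) : conjC V (z ⊗ₜ v) = (starRingEnd ℂ z) ⊗ₜ v := rfl

lemma smul_iotaC (z : ℂ) (v : V) : z • iotaC V v = z ⊗ₜ v := by
  simp [iotaC, TensorProduct.smul_tmul']

@[simp] lemma conjC_conjC (x : ℂ ⊗[ℝ] V) : conjC V (conjC V x) = x := by
  induction x using TensorProduct.induction_on with
  | zero => simp
  | tmul z v => simp [conjC_tmul]
  | add a b ha hb => simp only [map_add, ha, hb]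

@[simp] lemma conjC_iotaC (v : V) : conjC V (iotaC V v) = iotaC V v := by
  simp [iotaC, conjC_tmul]

noncomputable def reC (V : Type*) [AddCommGroup V] [Module ℝ V] : ℂ ⊗[ℝ] V →ₗ[ℝ] V :=
  TensorProduct.lid ℝ V ∘ₗ TensorProduct.map Complex.reLm LinearMap.id

noncomputable def imC (V : Type*) [AddCommGroup V] [Module ℝ V] : ℂ ⊗[ℝ] V →ₗ[ℝ] V :=
  TensorProduct.lid ℝ V ∘ₗ TensorProduct.map Complex.imLm LinearMap.id

@[simp] lemma reC_tmul (z : ℂ) (v : V) : reC V (z ⊗ₜ v) = z.re • v := by simp [reC]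

@[simp] lemma imC_tmul (z : ℂ) (v : V) : imC V (z ⊗ₜ v) = z.im • v := by simp [imC]

@[simp] lemma reC_iotaC (v : V) : reC V (iotaC V v) = v := by simp [iotaC]

lemma imC_conjC (x : ℂ ⊗[ℝ] V) : imC V (conjC V x) = -imC V x := by
  induction x using TensorProduct.induction_on with
  | zero => simp
  | tmul z v => simp [conjC_tmul, neg_smul]
  | add a b ha hb => simp only [map_add, ha, hb, neg_add]

lemma iotaC_reC_add_I_smul_iotaC_imC (x : ℂ ⊗[ℝ] V) :
    iotaC V (reC V x) + Complex.I • iotaC V (imC V x) = x := by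
  induction x using TensorProduct.induction_on with
  | zero => simp
  | tmul z v =>
    conv_rhs => rw [← smul_iotaC, ← Complex.re_add_im z]
    rw [reC_tmul, imC_tmul, map_smul, map_smul, add_smul, mul_smul, smul_comm Complex.I]
    simp only [Complex.coe_smul]
    rfl
  | add a b ha hb =>
    rw [map_add, map_add, map_add, map_add, smul_add]
    conv_rhs => rw [← ha, ← hb]
    abel

lemma iotaC_reC_of_conjC_eq {x : ℂ ⊗[ℝ] V} (hx : conjC V x = x) : iotaC V (reC V x) = x := by
  have him : imC V x = 0 := by
    have h := imC_conjC x
    rw [hx] at h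
    linear_combination (norm := module) (2⁻¹ : ℝ) • h
  simpa [him] using iotaC_reC_add_I_smul_iotaC_imC x

lemma reC_baseChange_iotaC (f : V →ₗ[ℝ] W) (v : V) :
    reC W (f.baseChange ℂ (iotaC V v)) = f v := by
  simp [iotaC]

lemma exists_baseChange_eq_of_comm_conjC (gc : ℂ ⊗[ℝ] V →ₗ[ℂ] ℂ ⊗[ℝ] W)
    (hgc : ∀ x, gc (conjC V x) = conjC W (gc x)) : ∃ g : V →ₗ[ℝ] W, g.baseChange ℂ = gc := by
  refine ⟨reC W ∘ₗ gc.restrictScalars ℝ ∘ₗ iotaC V,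
    TensorProduct.AlgebraTensorModule.ext fun z v => ?_⟩
  have hfix : conjC W (gc (iotaC V v)) = gc (iotaC V v) := by rw [← hgc, conjC_iotaC]
  rw [LinearMap.baseChange_tmul, ← smul_iotaC, ← smul_iotaC, map_smul]
  simp [iotaC_reC_of_conjC_eq hfix]

lemma exists_linearEquiv_baseChange_eq_of_comm_conjC (gc : ℂ ⊗[ℝ] V ≃ₗ[ℂ] ℂ ⊗[ℝ] W)
    (hgc : ∀ x, gc (conjC V x) = conjC W (gc x)) :
    ∃ g : V ≃ₗ[ℝ] W, (g : V →ₗ[ℝ] W).baseChange ℂ = gc := by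
  obtain ⟨g, hg⟩ := exists_baseChange_eq_of_comm_conjC (gc : ℂ ⊗[ℝ] V →ₗ[ℂ] ℂ ⊗[ℝ] W) hgc
  obtain ⟨g', hg'⟩ := exists_baseChange_eq_of_comm_conjC
    (gc.symm : ℂ ⊗[ℝ] W →ₗ[ℂ] ℂ ⊗[ℝ] V) fun y => gc.injective <| by simp [hgc]
  refine ⟨LinearEquiv.ofLinearMap g g' ?_ ?_, hg⟩ <;> ext u
  · simpa [LinearMap.baseChange_comp, hg, hg'] using (reC_baseChange_iotaC (g ∘ₗ g') u).symm
  · simpa [LinearMap.baseChange_comp, hg, hg'] using (reC_baseChange_iotaC (g' ∘ₗ g) u).symm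

end Complexification

section InternalDirectSum

variable {R M M' ι : Type*} [Ring R] [AddCommGroup M] [Module R M] [AddCommGroup M']
  [Module R M'] [DecidableEq ι] {κ : ι → Type*}

lemma Module.Basis.span_range_coe {W : Submodule R M} {α : Type*} (b : Module.Basis α R W) :
    Submodule.span R (Set.range fun j => (b j : M)) = W := by
  rw [show (fun j => (b j : M)) = W.subtype ∘ b from rfl, Set.range_comp, Submodule.span_image,
    b.span_eq, Submodule.map_subtype_top]

lemma DirectSum.IsInternal.exists_linearEquiv_map_eq {A : ι → Submodule R M}
    {A' : ι → Submodule R M'} (hA : DirectSum.IsInternal A) (hA' : DirectSum.IsInternal A')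
    (b : ∀ i, Module.Basis (κ i) R (A i)) (b' : ∀ i, Module.Basis (κ i) R (A' i)) :
    ∃ g : M ≃ₗ[R] M', (∀ i j, g (b i j) = b' i j) ∧ ∀ i, (A i).map (g : M →ₗ[R] M') = A' i := by
  let g := (hA.collectedBasis b).equiv (hA'.collectedBasis b') (Equiv.refl _)
  have hg : ∀ i j, g (b i j) = b' i j := fun i j => by
    simpa [g, hA.collectedBasis_coe, hA'.collectedBasis_coe] using
      (hA.collectedBasis b).equiv_apply ⟨i, j⟩ (hA'.collectedBasis b') (Equiv.refl _)
  refine ⟨g, hg, fun i => ?_⟩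
  rw [← (b i).span_range_coe, Submodule.map_span, ← Set.range_comp, ← (b' i).span_range_coe]
  congr 1
  exact congrArg Set.range (funext (hg i))

end InternalDirectSum

section ComplexifiedForm

variable {V : Type*} [AddCommGroup V] [Module ℝ V] {ψ : V →ₗ[ℝ] V →ₗ[ℝ] ℝ}
  {ψc : ℂ ⊗[ℝ] V →ₗ[ℂ] ℂ ⊗[ℝ] V →ₗ[ℂ] ℂ}

lemma apply_tmul_tmul_of_extends (hExt : ∀ v w : V, ψc (iotaC V v) (iotaC V w) = (ψ v w : ℂ))
    (z w : ℂ) (v u : V) : ψc (z ⊗ₜ v) (w ⊗ₜ u) = z * w * ψ v u := by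
  rw [← smul_iotaC, ← smul_iotaC]
  simp only [map_smul, LinearMap.smul_apply, hExt, smul_eq_mul]
  ring

lemma apply_conjC_conjC_of_extends
    (hExt : ∀ v w : V, ψc (iotaC V v) (iotaC V w) = (ψ v w : ℂ)) (x y : ℂ ⊗[ℝ] V) :
    ψc (conjC V x) (conjC V y) = starRingEnd ℂ (ψc x y) := by
  induction x using TensorProduct.induction_on with
  | zero => simp
  | add a b ha hb => simp only [map_add, LinearMap.add_apply, ha, hb]
  | tmul z v =>
    induction y using TensorProduct.induction_on with
    | zero => simp
    | add a b ha hb => simp only [map_add, ha, hb]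
    | tmul w u => simp [conjC_tmul, apply_tmul_tmul_of_extends hExt]

lemma apply_comm_of_extends {k : ℤ} (hsymm : ∀ v w : V, ψ w v = (-1 : ℝ) ^ k * ψ v w)
    (hExt : ∀ v w : V, ψc (iotaC V v) (iotaC V w) = (ψ v w : ℂ)) (x y : ℂ ⊗[ℝ] V) :
    ψc y x = (-1 : ℂ) ^ k * ψc x y := by
  induction x using TensorProduct.induction_on with
  | zero => simp
  | add a b ha hb => simp only [map_add, LinearMap.add_apply, ha, hb, mul_add]
  | tmul z v =>
    induction y using TensorProduct.induction_on with
    | zero => simp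
    | add a b ha hb => simp only [map_add, LinearMap.add_apply, ha, hb, mul_add]
    | tmul w u =>
      simp only [apply_tmul_tmul_of_extends hExt, hsymm v u]
      push_cast
      ring

end ComplexifiedForm

section HodgeForm

variable {V : Type*} [AddCommGroup V] [Module ℝ V]

noncomputable def hodgeForm (ψc : ℂ ⊗[ℝ] V →ₗ[ℂ] ℂ ⊗[ℝ] V →ₗ[ℂ] ℂ) (k p : ℤ) :
    ℂ ⊗[ℝ] V →ₗ⋆[ℂ] ℂ ⊗[ℝ] V →ₗ[ℂ] ℂ :=
  Complex.I ^ (2 * p - k) • ψc.flip.comp (conjC V)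

variable {ψ : V →ₗ[ℝ] V →ₗ[ℝ] ℝ} {ψc : ℂ ⊗[ℝ] V →ₗ[ℂ] ℂ ⊗[ℝ] V →ₗ[ℂ] ℂ} {k : ℤ}

lemma hodgeForm_apply (p : ℤ) (x y : ℂ ⊗[ℝ] V) :
    hodgeForm ψc k p x y = Complex.I ^ (2 * p - k) * ψc y (conjC V x) := rfl

lemma conj_I_zpow (m : ℤ) : starRingEnd ℂ (Complex.I ^ m) = Complex.I ^ (-m) := by
  rw [map_zpow₀, Complex.conj_I, ← Complex.inv_I, inv_zpow, zpow_neg]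

lemma I_zpow_add_four_mul (m n : ℤ) : Complex.I ^ (m + 4 * n) = Complex.I ^ m := by
  rw [zpow_add₀ Complex.I_ne_zero, zpow_mul]
  norm_num

lemma hodgeForm_conjC_conjC (hsymm : ∀ v w : V, ψ w v = (-1 : ℝ) ^ k * ψ v w)
    (hExt : ∀ v w : V, ψc (iotaC V v) (iotaC V w) = (ψ v w : ℂ)) (p : ℤ) (x y : ℂ ⊗[ℝ] V) :
    hodgeForm ψc k p (conjC V x) (conjC V y) = hodgeForm ψc k (k - p) y x := by
  have hsign : Complex.I ^ (2 * p - k) * (-1 : ℂ) ^ k = Complex.I ^ (2 * (k - p) - k) := by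
    rw [← Complex.I_sq, ← zpow_natCast, ← zpow_mul, ← zpow_add₀ Complex.I_ne_zero,
      ← I_zpow_add_four_mul (2 * (k - p) - k) p]
    ring_nf
  rw [hodgeForm_apply, hodgeForm_apply, conjC_conjC, apply_comm_of_extends hsymm hExt x,
    ← mul_assoc, hsign]

lemma conj_hodgeForm (hExt : ∀ v w : V, ψc (iotaC V v) (iotaC V w) = (ψ v w : ℂ))
    (p : ℤ) (x y : ℂ ⊗[ℝ] V) :
    starRingEnd ℂ (hodgeForm ψc k p x y) = hodgeForm ψc k (k - p) (conjC V x) (conjC V y) := by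
  rw [hodgeForm_apply, hodgeForm_apply, map_mul, conj_I_zpow,
    ← apply_conjC_conjC_of_extends hExt]
  ring_nf

lemma isSymm_hodgeForm (hsymm : ∀ v w : V, ψ w v = (-1 : ℝ) ^ k * ψ v w)
    (hExt : ∀ v w : V, ψc (iotaC V v) (iotaC V w) = (ψ v w : ℂ)) (p : ℤ) :
    (hodgeForm ψc k p).IsSymm where
  eq x y := by
    rw [conj_hodgeForm hExt, hodgeForm_conjC_conjC hsymm hExt, sub_sub_cancel]

end HodgeForm

section OrthonormalBasis

open scoped InnerProductSpace

variable {E : Type*} [NormedAddCommGroup E] [InnerProductSpace ℂ E] [FiniteDimensional ℂ E]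

theorem exists_orthonormalBasis_forall_apply_eq (σ : E →ₗ⋆[ℂ] E) (hσ : ∀ x, σ (σ x) = x)
    (hinner : ∀ x y, ⟪σ x, σ y⟫_ℂ = ⟪y, x⟫_ℂ) :
    ∃ b : OrthonormalBasis (Fin (Module.finrank ℂ E)) ℂ E, ∀ i, σ (b i) = b i := by
  let _ : InnerProductSpace ℝ E := InnerProductSpace.complexToReal
  let W : Submodule ℝ E :=
    { carrier := {x | σ x = x}
      add_mem' := fun {x y} hx hy => by simp_all
      zero_mem' := map_zero σ
      smul_mem' := fun r x hx => by
        simp_all [← Complex.coe_smul] }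
  let w := stdOrthonormalBasis ℝ W
  have hmem : ∀ x, σ x = x → x ∈ Submodule.span ℂ (Set.range fun i => (w i : E)) := by
    intro x hx
    have h := Submodule.mem_map_of_mem (f := W.subtype) (w.toBasis.mem_span ⟨x, hx⟩)
    rw [Submodule.map_span, ← Set.range_comp] at h
    exact Submodule.span_le_restrictScalars ℝ ℂ _ h
  have hon : Orthonormal ℂ fun i => (w i : E) := by
    rw [orthonormal_iff_ite]
    intro i j
    have hreal : starRingEnd ℂ ⟪(w i : E), w j⟫_ℂ = ⟪(w i : E), w j⟫_ℂ := by
      rw [inner_conj_symm, ← hinner, (w i).2, (w j).2]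
    have h := orthonormal_iff_ite.mp w.orthonormal i j
    rw [Submodule.coe_inner, real_inner_eq_re_inner, RCLike.re_to_complex] at h
    rw [← Complex.conj_eq_iff_re.mp hreal, h]
    split_ifs <;> simp
  have hsp : ⊤ ≤ Submodule.span ℂ (Set.range fun i => (w i : E)) := by
    intro x _
    have hre : σ ((2⁻¹ : ℂ) • (x + σ x)) = (2⁻¹ : ℂ) • (x + σ x) := by
      simp [hσ, add_comm, map_ofNat]
    have him : σ (Complex.I • (x - σ x)) = Complex.I • (x - σ x) := by
      rw [map_smulₛₗ, map_sub, hσ, Complex.conj_I]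
      module
    have hx : x = (2⁻¹ : ℂ) • (x + σ x) + (-(2⁻¹ : ℂ) * Complex.I) • (Complex.I • (x - σ x)) := by
      rw [smul_smul, mul_assoc, Complex.I_mul_I]
      module
    rw [hx]
    exact add_mem (hmem _ hre) (Submodule.smul_mem _ _ (hmem _ him))
  let b := OrthonormalBasis.mk hon hsp
  have hcard : Module.finrank ℂ E = Module.finrank ℝ W := by
    simpa using Module.finrank_eq_card_basis b.toBasis
  exact ⟨b.reindex (finCongr hcard.symm), fun i => by
    simp only [b, OrthonormalBasis.reindex_apply, OrthonormalBasis.coe_mk]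
    exact (w _).2⟩

end OrthonormalBasis

section PositiveDefiniteForm

variable {E : Type*} [AddCommGroup E] [Module ℂ E] {B : E →ₗ⋆[ℂ] E →ₗ[ℂ] ℂ}

abbrev LinearMap.IsSymm.innerProductCore (hB : B.IsSymm)
    (hpos : ∀ x, x ≠ 0 → 0 < (B x x).re) : InnerProductSpace.Core ℂ E where
  inner x y := B x y
  conj_inner_symm x y := hB.eq y x
  re_inner_nonneg x := by
    rcases eq_or_ne x 0 with rfl | hx
    · simp
    · exact (hpos x hx).le
  add_left x y z := by simp
  smul_left x y r := by simp
  definite x hx := by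
    by_contra h
    simpa [hx] using hpos x h

variable [FiniteDimensional ℂ E]

lemma exists_basis_orthonormal_of_isSymm (hB : B.IsSymm) (hpos : ∀ x, x ≠ 0 → 0 < (B x x).re) :
    ∃ b : Module.Basis (Fin (Module.finrank ℂ E)) ℂ E,
      ∀ i j, B (b i) (b j) = if i = j then 1 else 0 := by
  let core := hB.innerProductCore hpos
  let _ : NormedAddCommGroup E := core.toNormedAddCommGroup
  let _ : InnerProductSpace ℂ E := InnerProductSpace.ofCore core.toCore
  let b := stdOrthonormalBasis ℂ E
  exact ⟨b.toBasis, fun i j => by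
    rw [b.coe_toBasis]
    exact orthonormal_iff_ite.mp b.orthonormal i j⟩

lemma exists_basis_orthonormal_forall_apply_eq_of_isSymm (hB : B.IsSymm)
    (hpos : ∀ x, x ≠ 0 → 0 < (B x x).re) (σ : E →ₗ⋆[ℂ] E) (hσ : ∀ x, σ (σ x) = x)
    (hBσ : ∀ x y, B (σ x) (σ y) = B y x) :
    ∃ b : Module.Basis (Fin (Module.finrank ℂ E)) ℂ E,
      (∀ i j, B (b i) (b j) = if i = j then 1 else 0) ∧ ∀ i, σ (b i) = b i := by
  let core := hB.innerProductCore hpos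
  let _ : NormedAddCommGroup E := core.toNormedAddCommGroup
  let _ : InnerProductSpace ℂ E := InnerProductSpace.ofCore core.toCore
  obtain ⟨b, hb⟩ := exists_orthonormalBasis_forall_apply_eq σ hσ hBσ
  refine ⟨b.toBasis, fun i j => ?_, by simpa using hb⟩
  rw [b.coe_toBasis]
  exact orthonormal_iff_ite.mp b.orthonormal i j

end PositiveDefiniteForm

section ConjugateBasis

variable {V : Type*} [AddCommGroup V] [Module ℝ V]

lemma exists_basis_map_conjC {ι : Type*} {W : Submodule ℂ (ℂ ⊗[ℝ] V)} (b : Module.Basis ι ℂ W) :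
    ∃ b' : Module.Basis ι ℂ (W.map (conjC V)), ∀ i, (b' i : ℂ ⊗[ℝ] V) = conjC V (b i) := by
  have hli : LinearIndependent ℂ fun i => conjC V (b i) :=
    (b.linearIndependent.map' W.subtype W.ker_subtype).map_of_injective_injectiveₛ
      (starRingEnd ℂ) (conjC V).toAddMonoidHom (RingHom.injective _)
      (Function.LeftInverse.injective conjC_conjC) fun r m => by simp
  have hspan : Submodule.span ℂ (Set.range fun i => conjC V (b i)) = W.map (conjC V) := by
    rw [show (fun i => conjC V (b i)) = conjC V ∘ fun i => (b i : ℂ ⊗[ℝ] V) from rfl,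
      Set.range_comp, Submodule.span_image, b.span_range_coe]
  exact ⟨(Module.Basis.span hli).map (LinearEquiv.ofEq _ _ hspan), fun i => by
    simp [Module.Basis.span_apply]⟩

lemma finrank_map_conjC [FiniteDimensional ℝ V] (W : Submodule ℂ (ℂ ⊗[ℝ] V)) :
    Module.finrank ℂ (W.map (conjC V)) = Module.finrank ℂ W := by
  obtain ⟨b, -⟩ := exists_basis_map_conjC (Module.finBasis ℂ W)
  simp [Module.finrank_eq_card_basis b]

end ConjugateBasis

section HodgeFrame

variable {V : Type*} [AddCommGroup V] [Module ℝ V]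

/-- The indices run over `ℕ`, with `e p i = 0` for `i ≥ n p`, so that conjugation acts on them as
`(p, i) ↦ (k - p, i)` with no casts between `Fin (n p)` and `Fin (n (k - p))`. -/
structure IsHodgeFrame (ψc : ℂ ⊗[ℝ] V →ₗ[ℂ] ℂ ⊗[ℝ] V →ₗ[ℂ] ℂ) (k : ℤ)
    (H : ℤ → Submodule ℂ (ℂ ⊗[ℝ] V)) (n : ℤ → ℕ) (e : ℤ → ℕ → ℂ ⊗[ℝ] V) : Prop where
  exists_basis (p : ℤ) : ∃ b : Module.Basis (Fin (n p)) ℂ (H p), ∀ i, (b i : ℂ ⊗[ℝ] V) = e p i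
  eq_zero (p : ℤ) (i : ℕ) : n p ≤ i → e p i = 0
  hodgeForm_eq (p : ℤ) (i j : ℕ) :
    i < n p → j < n p → hodgeForm ψc k p (e p i) (e p j) = if i = j then 1 else 0
  conjC_eq (p : ℤ) (i : ℕ) : conjC V (e p i) = e (k - p) i

namespace IsHodgeFrame

variable {ψc : ℂ ⊗[ℝ] V →ₗ[ℂ] ℂ ⊗[ℝ] V →ₗ[ℂ] ℂ} {k : ℤ} {H H' : ℤ → Submodule ℂ (ℂ ⊗[ℝ] V)}
  {n : ℤ → ℕ} {e f : ℤ → ℕ → ℂ ⊗[ℝ] V}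

lemma mem (he : IsHodgeFrame ψc k H n e) (p : ℤ) (i : ℕ) : e p i ∈ H p := by
  obtain ⟨b, hb⟩ := he.exists_basis p
  rcases lt_or_ge i (n p) with hi | hi
  · exact hb ⟨i, hi⟩ ▸ (b ⟨i, hi⟩).2
  · exact he.eq_zero p i hi ▸ zero_mem _

lemma apply_eq (he : IsHodgeFrame ψc k H n e)
    (hHR1 : ∀ p r : ℤ, r ≠ k - p → ∀ v ∈ H p, ∀ w ∈ H r, ψc v w = 0) (p r : ℤ) (i j : ℕ) :
    ψc (e p i) (e r j) =
      if r = k - p ∧ i = j ∧ i < n p then Complex.I ^ (k - 2 * p) else 0 := by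
  by_cases hr : r = k - p
  · subst hr
    have hform : ψc (e p i) (e (k - p) j) =
        Complex.I ^ (k - 2 * p) * hodgeForm ψc k p (e p j) (e p i) := by
      rw [← he.conjC_eq, hodgeForm_apply, ← mul_assoc, ← zpow_add₀ Complex.I_ne_zero,
        show k - 2 * p + (2 * p - k) = 0 by ring, zpow_zero, one_mul]
    rcases lt_or_ge i (n p) with hi | hi
    · rcases lt_or_ge j (n p) with hj | hj
      · rw [hform, he.hodgeForm_eq p j i hj hi]
        by_cases hij : i = j
        · simp [hij, hj]
        · simp [hij, Ne.symm hij]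
      · rw [hform, he.eq_zero p j hj]
        have : i ≠ j := by omega
        simp [this]
    · simp [he.eq_zero p i hi, not_lt.mpr hi]
  · rw [hHR1 p r hr _ (he.mem p i) _ (he.mem r j), if_neg (by tauto)]

lemma exists_linearEquiv (he : IsHodgeFrame ψc k H n e) (hf : IsHodgeFrame ψc k H' n f)
    (hH : DirectSum.IsInternal H) (hH' : DirectSum.IsInternal H')
    (hHR1 : ∀ p r : ℤ, r ≠ k - p → ∀ v ∈ H p, ∀ w ∈ H r, ψc v w = 0)
    (hHR1' : ∀ p r : ℤ, r ≠ k - p → ∀ v ∈ H' p, ∀ w ∈ H' r, ψc v w = 0) :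
    ∃ gc : ℂ ⊗[ℝ] V ≃ₗ[ℂ] ℂ ⊗[ℝ] V, (∀ x, gc (conjC V x) = conjC V (gc x)) ∧
      (∀ x y, ψc (gc x) (gc y) = ψc x y) ∧
      ∀ p, (H p).map (gc : ℂ ⊗[ℝ] V →ₗ[ℂ] ℂ ⊗[ℝ] V) = H' p := by
  choose b hb using he.exists_basis
  choose b' hb' using hf.exists_basis
  obtain ⟨gc, hgc, hmap⟩ := hH.exists_linearEquiv_map_eq hH' b b'
  have hgc' : ∀ p i, gc (e p i) = f p i := fun p i => by
    rcases lt_or_ge i (n p) with hi | hi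
    · simpa [hb, hb'] using hgc p ⟨i, hi⟩
    · rw [he.eq_zero p i hi, hf.eq_zero p i hi, map_zero]
  let E := hH.collectedBasis b
  have hE : ∀ a, E a = e a.1 a.2 := fun a => by simp [E, hH.collectedBasis_coe, hb]
  refine ⟨gc, fun x => ?_, fun x y => ?_, hmap⟩
  · have := E.ext (f₁ := (gc : ℂ ⊗[ℝ] V →ₗ[ℂ] ℂ ⊗[ℝ] V).comp (conjC V))
      (f₂ := (conjC V).comp (gc : ℂ ⊗[ℝ] V →ₗ[ℂ] ℂ ⊗[ℝ] V)) fun a => by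
        simp [hE, he.conjC_eq, hf.conjC_eq, hgc']
    exact LinearMap.congr_fun this x
  · have := E.ext (f₁ := ψc.compl₁₂ (gc : ℂ ⊗[ℝ] V →ₗ[ℂ] ℂ ⊗[ℝ] V) gc) (f₂ := ψc)
      fun a => E.ext fun c => by
        simp [hE, hgc', he.apply_eq hHR1, hf.apply_eq hHR1']
    exact LinearMap.congr_fun₂ this x y

end IsHodgeFrame

end HodgeFrame

section ExistsHodgeFrame

variable {V : Type*} [AddCommGroup V] [Module ℝ V] [FiniteDimensional ℝ V]
  {ψ : V →ₗ[ℝ] V →ₗ[ℝ] ℝ} {ψc : ℂ ⊗[ℝ] V →ₗ[ℂ] ℂ ⊗[ℝ] V →ₗ[ℂ] ℂ} {k : ℤ}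
  {H : ℤ → Submodule ℂ (ℂ ⊗[ℝ] V)}

lemma exists_basis_hodgeForm_orthonormal (hsymm : ∀ v w : V, ψ w v = (-1 : ℝ) ^ k * ψ v w)
    (hExt : ∀ v w : V, ψc (iotaC V v) (iotaC V w) = (ψ v w : ℂ))
    (hConj : ∀ p : ℤ, (H p).map (conjC V) = H (k - p))
    (hpos : ∀ p : ℤ, ∀ v ∈ H p, v ≠ 0 → 0 < (hodgeForm ψc k p v v).re)
    {n : ℤ → ℕ} (hn : ∀ p, Module.finrank ℂ (H p) = n p) (p : ℤ) :
    ∃ b : Module.Basis (Fin (n p)) ℂ (H p),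
      (∀ i j, hodgeForm ψc k p (b i) (b j) = if i = j then 1 else 0) ∧
        (2 * p = k → ∀ i, conjC V (b i) = b i) := by
  let B := (hodgeForm ψc k p).domRestrict₁₂ (H p) (H p)
  have hB : B.IsSymm := (isSymm_hodgeForm hsymm hExt p).domRestrict (H p)
  have hBpos : ∀ x, x ≠ 0 → 0 < (B x x).re := fun x hx =>
    hpos p x x.2 (by simpa using hx)
  suffices ∃ b : Module.Basis (Fin (Module.finrank ℂ (H p))) ℂ (H p),
      (∀ i j, B (b i) (b j) = if i = j then 1 else 0) ∧
        (2 * p = k → ∀ i, conjC V (b i) = b i) by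
    obtain ⟨b, hb, hfix⟩ := this
    refine ⟨b.reindex (finCongr (hn p)), fun i j => ?_, fun hp i => ?_⟩
    · simpa [B, LinearMap.domRestrict₁₂_apply] using
        hb ((finCongr (hn p)).symm i) ((finCongr (hn p)).symm j)
    · simpa using hfix hp ((finCongr (hn p)).symm i)
  by_cases hp : 2 * p = k
  · have hkp : k - p = p := by omega
    have hstable : ∀ x ∈ H p, conjC V x ∈ H p := fun x hx => by
      simpa [hConj, hkp] using Submodule.mem_map_of_mem (f := conjC V) hx
    obtain ⟨b, hb, hfix⟩ := exists_basis_orthonormal_forall_apply_eq_of_isSymm hB hBpos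
      ((conjC V).restrict hstable) (fun x => Subtype.ext (conjC_conjC (x : ℂ ⊗[ℝ] V))) fun x y => by
        simpa [B, LinearMap.domRestrict₁₂_apply, LinearMap.restrict_apply, hkp] using
          hodgeForm_conjC_conjC hsymm hExt p x y
    exact ⟨b, hb, fun _ i => congrArg Subtype.val (hfix i)⟩
  · obtain ⟨b, hb⟩ := exists_basis_orthonormal_of_isSymm hB hBpos
    exact ⟨b, hb, fun h => absurd h hp⟩

lemma exists_isHodgeFrame (hsymm : ∀ v w : V, ψ w v = (-1 : ℝ) ^ k * ψ v w)
    (hExt : ∀ v w : V, ψc (iotaC V v) (iotaC V w) = (ψ v w : ℂ))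
    (hConj : ∀ p : ℤ, (H p).map (conjC V) = H (k - p))
    (hpos : ∀ p : ℤ, ∀ v ∈ H p, v ≠ 0 → 0 < (hodgeForm ψc k p v v).re)
    {n : ℤ → ℕ} (hn : ∀ p, Module.finrank ℂ (H p) = n p) :
    ∃ e, IsHodgeFrame ψc k H n e := by
  choose b hb hfix using exists_basis_hodgeForm_orthonormal hsymm hExt hConj hpos hn
  have hsym : ∀ p, n (k - p) = n p := fun p => by rw [← hn, ← hn, ← hConj, finrank_map_conjC]
  let e₀ : ℤ → ℕ → ℂ ⊗[ℝ] V := fun p i => if h : i < n p then b p ⟨i, h⟩ else 0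
  have he₀_zero : ∀ p i, n p ≤ i → e₀ p i = 0 := fun p i hi => dif_neg (by omega)
  have he₀_form : ∀ p i j, i < n p → j < n p →
      hodgeForm ψc k p (e₀ p i) (e₀ p j) = if i = j then 1 else 0 := fun p i j hi hj => by
    simp only [e₀, dif_pos hi, dif_pos hj, hb, Fin.mk.injEq]
  have he₀_fix : ∀ p i, 2 * p = k → conjC V (e₀ p i) = e₀ p i := fun p i hp => by
    by_cases hi : i < n p
    · simp only [e₀, dif_pos hi, hfix p hp]
    · simp only [e₀, dif_neg hi, map_zero]
  refine ⟨fun p i => if k ≤ 2 * p then e₀ p i else conjC V (e₀ (k - p) i),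
    ⟨fun p => ?_, fun p i hi => ?_, fun p i j hi hj => ?_, fun p i => ?_⟩⟩
  · by_cases hp : k ≤ 2 * p
    · exact ⟨b p, fun i => by simp [hp, e₀]⟩
    · obtain ⟨b', hb'⟩ := exists_basis_map_conjC (b (k - p))
      have hH : (H (k - p)).map (conjC V) = H p := by rw [hConj, sub_sub_cancel]
      refine ⟨(b'.map (LinearEquiv.ofEq _ _ hH)).reindex (finCongr (hsym p)), fun i => ?_⟩
      have hi : (i : ℕ) < n (k - p) := (hsym p).symm ▸ i.2
      simp only [hp, if_false, e₀, dif_pos hi, Module.Basis.reindex_apply, Module.Basis.map_apply,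
        LinearEquiv.coe_ofEq_apply, hb']
      rfl
  · have hi' : n (k - p) ≤ i := hsym p ▸ hi
    split_ifs <;> simp [he₀_zero _ _ hi, he₀_zero _ _ hi']
  · by_cases hp : k ≤ 2 * p
    · simp only [hp, if_true]
      exact he₀_form p i j hi hj
    · simp only [hp, if_false]
      rw [hodgeForm_conjC_conjC hsymm hExt, he₀_form (k - p) j i (by rwa [hsym]) (by rwa [hsym])]
      simp only [eq_comm]
  · by_cases hp : k ≤ 2 * p <;> by_cases hq : k ≤ 2 * (k - p)
    · have hkp : k - p = p := by omega
      simp only [hp, if_true, hkp, he₀_fix p i (by omega)]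
    · simp only [hp, hq, if_true, if_false, sub_sub_cancel]
    · simp only [hp, hq, if_true, if_false, conjC_conjC]
    · omega

end ExistsHodgeFrame

theorem stmt10_general {V : Type*} [AddCommGroup V] [Module ℝ V] [FiniteDimensional ℝ V]
    (k : ℤ)
    (ψ : V →ₗ[ℝ] V →ₗ[ℝ] ℝ)
    (hsymm : ∀ v w : V, ψ w v = (-1 : ℝ) ^ k * ψ v w)
    (ψc : (ℂ ⊗[ℝ] V) →ₗ[ℂ] (ℂ ⊗[ℝ] V) →ₗ[ℂ] ℂ)
    (hExt : ∀ v w : V, ψc (iotaC V v) (iotaC V w) = (ψ v w : ℂ))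
    (H H' : ℤ → Submodule ℂ (ℂ ⊗[ℝ] V))
    (hInternal : DirectSum.IsInternal H) (hInternal' : DirectSum.IsInternal H')
    (hConj : ∀ p : ℤ, (H p).map (conjC V) = H (k - p))
    (hConj' : ∀ p : ℤ, (H' p).map (conjC V) = H' (k - p))
    (hHR1 : ∀ p r : ℤ, r ≠ k - p → ∀ v ∈ H p, ∀ w ∈ H r, ψc v w = 0)
    (hHR1' : ∀ p r : ℤ, r ≠ k - p → ∀ v ∈ H' p, ∀ w ∈ H' r, ψc v w = 0)
    (hHR2 : ∀ p : ℤ, ∀ v ∈ H p, v ≠ 0 →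
        0 < (Complex.I ^ (2 * p - k) * ψc v (conjC V v)).re ∧
          (Complex.I ^ (2 * p - k) * ψc v (conjC V v)).im = 0)
    (hHR2' : ∀ p : ℤ, ∀ v ∈ H' p, v ≠ 0 →
        0 < (Complex.I ^ (2 * p - k) * ψc v (conjC V v)).re ∧
          (Complex.I ^ (2 * p - k) * ψc v (conjC V v)).im = 0)
    (hdim : ∀ p : ℤ, Module.finrank ℂ (H p) = Module.finrank ℂ (H' p)) :
    ∃ g : V ≃ₗ[ℝ] V,
      (∀ v w : V, ψ (g v) (g w) = ψ v w) ∧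
      ∀ p : ℤ, (H p).map (LinearMap.baseChange ℂ (g : V →ₗ[ℝ] V)) = H' p := by
  obtain ⟨e, he⟩ := exists_isHodgeFrame hsymm hExt hConj
    (fun p v hv hv0 => (hHR2 p v hv hv0).1) (n := fun p => Module.finrank ℂ (H p)) fun _ => rfl
  obtain ⟨f, hf⟩ := exists_isHodgeFrame hsymm hExt hConj'
    (fun p v hv hv0 => (hHR2' p v hv hv0).1) fun p => (hdim p).symm
  obtain ⟨gc, hgc_conj, hgc_form, hgc_map⟩ :=
    he.exists_linearEquiv hf hInternal hInternal' hHR1 hHR1'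
  obtain ⟨g, hg⟩ := exists_linearEquiv_baseChange_eq_of_comm_conjC gc hgc_conj
  refine ⟨g, fun v w => ?_, fun p => hg ▸ hgc_map p⟩
  have hgι : ∀ u, gc (iotaC V u) = iotaC V (g u) := fun u => by
    rw [← LinearEquiv.coe_coe, ← hg]
    rfl
  have h : (ψ (g v) (g w) : ℂ) = ψ v w := by rw [← hExt, ← hExt, ← hgι, ← hgι, hgc_form]
  exact_mod_cast h

/-- Let `V` be a finite-dimensional real vector space, `k` an integer,
and `ψ` a bilinear form on `V` with `ψ(w,v) = (-1)^k ψ(v,w)` (with complex-bilinear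
extension `ψc` to `V_ℂ = ℂ ⊗[ℝ] V`).  Suppose `H` and `H'` are two Hodge structures of
weight `k` on `V`, both polarized by `ψ`, with the same Hodge numbers.  Then some
real-linear isometry of `(V, ψ)` has complexification carrying `V^{p,q}` onto `W^{p,q}`
for every `(p,q)`: the real isometry group `G_ℝ` acts transitively on the period
domain `D`. -/
theorem stmt10 {V : Type*} [AddCommGroup V] [Module ℝ V] [FiniteDimensional ℝ V]
    (k : ℤ)
    (ψ : V →ₗ[ℝ] V →ₗ[ℝ] ℝ)
    (hsymm : ∀ v w : V, ψ w v = (-1 : ℝ) ^ k * ψ v w)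
    (ψc : (ℂ ⊗[ℝ] V) →ₗ[ℂ] (ℂ ⊗[ℝ] V) →ₗ[ℂ] ℂ)
    (hExt : ∀ v w : V, ψc (iotaC V v) (iotaC V w) = (ψ v w : ℂ))
    (H H' : ℤ → Submodule ℂ (ℂ ⊗[ℝ] V))
    (hInternal : DirectSum.IsInternal H) (hInternal' : DirectSum.IsInternal H')
    (hFinite : {p : ℤ | H p ≠ ⊥}.Finite) (hFinite' : {p : ℤ | H' p ≠ ⊥}.Finite)
    (hConj : ∀ p : ℤ, (H p).map (conjC V) = H (k - p))
    (hConj' : ∀ p : ℤ, (H' p).map (conjC V) = H' (k - p))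
    (hHR1 : ∀ p r : ℤ, r ≠ k - p → ∀ v ∈ H p, ∀ w ∈ H r, ψc v w = 0)
    (hHR1' : ∀ p r : ℤ, r ≠ k - p → ∀ v ∈ H' p, ∀ w ∈ H' r, ψc v w = 0)
    (hHR2 : ∀ p : ℤ, ∀ v ∈ H p, v ≠ 0 →
        0 < (Complex.I ^ (2 * p - k) * ψc v (conjC V v)).re ∧
          (Complex.I ^ (2 * p - k) * ψc v (conjC V v)).im = 0)
    (hHR2' : ∀ p : ℤ, ∀ v ∈ H' p, v ≠ 0 →
        0 < (Complex.I ^ (2 * p - k) * ψc v (conjC V v)).re ∧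
          (Complex.I ^ (2 * p - k) * ψc v (conjC V v)).im = 0)
    (hdim : ∀ p : ℤ, Module.finrank ℂ (H p) = Module.finrank ℂ (H' p)) :
    ∃ g : V ≃ₗ[ℝ] V,
      (∀ v w : V, ψ (g v) (g w) = ψ v w) ∧
      ∀ p : ℤ, (H p).map (LinearMap.baseChange ℂ (g : V →ₗ[ℝ] V)) = H' p :=
  stmt10_general k ψ hsymm ψc hExt H H' hInternal hInternal' hConj hConj' hHR1 hHR1' hHR2 hHR2' hdim
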